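/- arXiv:1102.4107 — 2 statements merged into one kernel-verified Lean document; each statement's English description precedes it below -/
import Mathlib

section
/- For every M there exists N such that for all even n ≥ N, there are at least M partitions of n, all corresponding to even permutations, having the same centralizer size in S_n. -/
/-!
Padding a multiset `q` of distinct parts `> 1` with ones gives a partition of `n` with centralizer
size `(n - Σ q)! * Π q`, which is even exactly when `Σ (x - 1)` over `q` is even. The triples
`{2, 8, 9}` and `{3, 4, 12}` have the same size, sum and product, so choosing independently one of
them at each scale `13 ^ i`, `i < M`, gives `2 ^ M` such multisets with the same sum and product;
since the scales are odd, every triple contributes an even amount to `Σ (x - 1)`.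
-/

open Nat

/-- The order of the centralizer in `S n` of a permutation of cycle type `λ`:
`∏ i, i ^ (m_i λ) * (m_i λ)!`. -/
def centralizerSize {n : ℕ} (lam : Nat.Partition n) : ℕ :=
  ∏ i ∈ lam.parts.toFinset, i ^ (lam.parts.count i) * (lam.parts.count i)!

/-- A partition is even if permutations of that cycle type are even,
i.e. `n - (number of parts)` is even. -/
def Nat.Partition.IsEven {n : ℕ} (lam : Nat.Partition n) : Prop :=
  Even (n - Multiset.card lam.parts)

namespace Nat.Partition

theorem isEven_iff {n : ℕ} (lam : n.Partition) :
    lam.IsEven ↔ Even (lam.parts.map (· - 1)).sum := by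
  rw [IsEven, Multiset.sum_map_tsub _ fun x hx => lam.parts_pos hx, Multiset.map_id',
    lam.parts_sum, Multiset.map_const', Multiset.sum_replicate, smul_eq_mul, mul_one]

theorem centralizerSize_eq {n : ℕ} (lam : n.Partition) :
    centralizerSize lam = lam.parts.prod * ∏ i ∈ lam.parts.toFinset, (lam.parts.count i)! := by
  rw [centralizerSize, Finset.prod_mul_distrib, Finset.prod_multiset_count]

def addOnes {n : ℕ} (q : Multiset ℕ) (hq : ∀ x ∈ q, 0 < x) (hn : q.sum ≤ n) : n.Partition where
  parts := Multiset.replicate (n - q.sum) 1 + q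
  parts_pos {x} hx := by
    rcases Multiset.mem_add.mp hx with h | h
    · rw [Multiset.eq_of_mem_replicate h]; exact one_pos
    · exact hq x h
  parts_sum := by
    rw [Multiset.sum_add, Multiset.sum_replicate, smul_eq_mul, mul_one]
    omega

variable {n : ℕ} {q : Multiset ℕ} (hq : ∀ x ∈ q, 0 < x) (hn : q.sum ≤ n)

theorem isEven_addOnes : (addOnes q hq hn).IsEven ↔ Even (q.map (· - 1)).sum := by
  simp [isEven_iff, addOnes]

theorem centralizerSize_addOnes (hnodup : q.Nodup) (h1 : 1 ∉ q) :
    centralizerSize (addOnes q hq hn) = (n - q.sum)! * q.prod := by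
  have hcount : ∀ x ≠ 1, (Multiset.replicate (n - q.sum) 1 + q).count x = q.count x := by
    intro x hx
    simp [Multiset.count_replicate, hx.symm]
  have hcount1 : (Multiset.replicate (n - q.sum) 1 + q).count 1 = n - q.sum := by
    simp [Multiset.count_eq_zero.mpr h1]
  rw [centralizerSize_eq, mul_comm]
  congr 1
  · refine (Finset.prod_eq_single 1 (fun x hx hx1 => ?_) fun h => ?_).trans ?_
    · rw [addOnes, hcount x hx1, Multiset.count_eq_one_of_mem hnodup, factorial_one]
      exact (Multiset.mem_add.mp (Multiset.mem_toFinset.mp hx)).resolve_left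
        fun h => hx1 (Multiset.eq_of_mem_replicate h)
    · rw [Multiset.count_eq_zero_of_notMem (by simpa using h), factorial_zero]
    · rw [addOnes, hcount1]
  · simp [addOnes]

end Nat.Partition

namespace SameCentralizer

def triple (t : ℕ) (b : Bool) : Multiset ℕ :=
  if b then {2 * t, 8 * t, 9 * t} else {3 * t, 4 * t, 12 * t}

variable {t x : ℕ} {b : Bool}

theorem sum_triple : (triple t b).sum = 19 * t := by
  cases b <;> simp [triple] <;> ring

theorem prod_triple : (triple t b).prod = 144 * t ^ 3 := by
  cases b <;> simp [triple] <;> ring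

theorem even_sum_map_pred_triple (ht : Odd t) : Even ((triple t b).map (· - 1)).sum := by
  obtain ⟨k, rfl⟩ := ht
  exact ⟨19 * k + 8, by cases b <;> (simp [triple]; omega)⟩

theorem nodup_triple (ht : 0 < t) : (triple t b).Nodup := by
  cases b <;> simp [triple] <;> omega

theorem mem_triple_bounds (ht : 0 < t) (hx : x ∈ triple t b) : t < x ∧ x < 13 * t := by
  cases b <;> simp [triple] at hx <;> omega

theorem two_mul_mem_triple_iff (ht : 0 < t) : 2 * t ∈ triple t b ↔ b = true := by
  cases b <;> simp [triple]
  omega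

theorem log_eq_of_mem_triple {i : ℕ} (hx : x ∈ triple (13 ^ i) b) : Nat.log 13 x = i := by
  have := mem_triple_bounds (by positivity) hx
  exact Nat.log_eq_of_pow_le_of_lt_pow (by omega) (by rw [pow_succ]; omega)

-- Since `triple t b ⊆ (t, 13 * t)`, triples at different scales `13 ^ i` are disjoint.
def triples {M : ℕ} (f : Fin M → Bool) : Multiset ℕ :=
  (Finset.univ : Finset (Fin M)).val.bind fun i => triple (13 ^ (i : ℕ)) (f i)

variable {M : ℕ} (f : Fin M → Bool)

theorem sum_triples : (triples f).sum = ∑ i : Fin M, 19 * 13 ^ (i : ℕ) := by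
  simp [triples, sum_triple, Finset.sum_eq_multiset_sum]

theorem prod_triples : (triples f).prod = ∏ i : Fin M, 144 * (13 ^ (i : ℕ)) ^ 3 := by
  simp [triples, prod_triple, Finset.prod_eq_multiset_prod]

theorem even_sum_map_pred_triples : Even ((triples f).map (· - 1)).sum := by
  rw [triples, Multiset.map_bind, Multiset.sum_bind, ← Finset.sum_eq_multiset_sum]
  exact Finset.even_sum _ fun i _ => even_sum_map_pred_triple (Odd.pow ⟨6, rfl⟩)

theorem one_lt_of_mem_triples (hx : x ∈ triples f) : 1 < x := by
  obtain ⟨i, -, hi⟩ := Multiset.mem_bind.mp hx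
  have := (mem_triple_bounds (by positivity) hi).1
  have := Nat.one_le_pow (i : ℕ) 13 (by norm_num)
  omega

theorem nodup_triples : (triples f).Nodup := by
  refine Multiset.nodup_bind.mpr ⟨fun i _ => nodup_triple (by positivity), ?_⟩
  refine Multiset.Nodup.pairwise (fun i _ j _ hij => ?_) Finset.univ.nodup
  refine Multiset.disjoint_left.mpr fun hi hj => hij (Fin.ext ?_)
  rw [← log_eq_of_mem_triple hi, log_eq_of_mem_triple hj]

theorem two_mul_pow_mem_triples_iff (i : Fin M) : 2 * 13 ^ (i : ℕ) ∈ triples f ↔ f i = true := by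
  refine ⟨fun h => ?_, fun h => Multiset.mem_bind.mpr
    ⟨i, Finset.mem_univ_val i, (two_mul_mem_triple_iff (by positivity)).mpr h⟩⟩
  obtain ⟨j, -, hj⟩ := Multiset.mem_bind.mp h
  obtain rfl : j = i := Fin.ext <| by
    rw [← log_eq_of_mem_triple hj, log_eq_of_mem_triple (b := true) (i := i) (by simp [triple])]
  exact (two_mul_mem_triple_iff (by positivity)).mp hj

theorem triples_injective : Function.Injective (triples (M := M)) := fun f g h =>
  funext fun i => Bool.eq_iff_iff.mpr <| by
    rw [← two_mul_pow_mem_triples_iff, ← two_mul_pow_mem_triples_iff, h]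

end SameCentralizer

open SameCentralizer Nat.Partition in
theorem many_even_partitions_same_centralizer_size (M : ℕ) :
    ∃ N : ℕ, ∀ n : ℕ, N ≤ n → Even n →
      ∃ c : ℕ, M ≤ Nat.card {lam : Nat.Partition n //
        lam.IsEven ∧ centralizerSize lam = c} := by
  refine ⟨∑ i : Fin M, 19 * 13 ^ (i : ℕ), fun n hn _ => ?_⟩
  have hsum (f : Fin M → Bool) : (triples f).sum ≤ n := (sum_triples f).trans_le hn
  have hpos (f : Fin M → Bool) : ∀ x ∈ triples f, 0 < x :=
    fun x hx => (one_lt_of_mem_triples f hx).le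
  refine ⟨(n - ∑ i : Fin M, 19 * 13 ^ (i : ℕ))! * ∏ i : Fin M, 144 * (13 ^ (i : ℕ)) ^ 3, ?_⟩
  let partition (f : Fin M → Bool) : {lam : n.Partition // lam.IsEven ∧ centralizerSize lam = _} :=
    ⟨addOnes (triples f) (hpos f) (hsum f),
      (isEven_addOnes _ _).mpr (even_sum_map_pred_triples f),
      by rw [centralizerSize_addOnes _ _ (nodup_triples f)
          fun h => (one_lt_of_mem_triples f h).false, sum_triples, prod_triples]⟩
  have hinj : Function.Injective partition := fun f g h =>
    triples_injective (by simpa [partition, addOnes, sum_triples] using congrArg (·.1.parts) h)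
  calc M ≤ 2 ^ M := M.lt_two_pow_self.le
    _ = Nat.card (Fin M → Bool) := by simp
    _ ≤ _ := Nat.card_le_card_of_injective _ hinj
end

section
/- For any constant a > 1 and any fixed positive integer n, the quantity a^{k/n} / ((k+1) · d(k!)) tends to infinity as k → ∞, where d(k!) is the number of positive divisors of k!. -/
/-!
Since `d(k!) = ∏_{p ≤ k} (v_p(k!) + 1)` and `v_p(k!) ≤ k / (p - 1)`, splitting the primes at
`m ≈ k / (log k)²` gives `d(k!) ≤ (k + 1)^m · (k / m + 1)^π(k)`. With Chebyshev's bound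
`π(k) = O(k / log k)` both factors are `exp(O(k log log k / log k))`, so
`log ((k + 1) d(k!)) = o(k)`, which is beaten by the linear growth of `log a^{k/n} = (k/n) log a`.
-/

open Filter Nat
open Finset Topology

theorem card_divisors_factorial_pos (k : ℕ) : 0 < #(k !).divisors :=
  card_pos.mpr (nonempty_divisors.mpr (factorial_ne_zero k))

theorem card_divisors_factorial_le (k : ℕ) {m : ℕ} (hm : 0 < m) :
    #(k !).divisors ≤ (k + 1) ^ m * (k / m + 1) ^ primeCounting k := by
  have hsub : (k !).primeFactors ⊆ primesLE k := fun p hp =>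
    have hp' := prime_of_mem_primeFactors hp
    mem_primesLE.mpr ⟨hp'.dvd_factorial.mp (dvd_of_mem_primeFactors hp), hp'⟩
  have hsmall : #{p ∈ primesLE k | p ≤ m} ≤ m := by
    simpa using card_le_card (s := {p ∈ primesLE k | p ≤ m}) (t := Ioc 0 m) fun p hp => by
      simp only [mem_filter, mem_primesLE] at hp
      exact mem_Ioc.mpr ⟨hp.1.2.pos, hp.2⟩
  calc #(k !).divisors = ∏ p ∈ (k !).primeFactors, ((k !).factorization p + 1) :=
        Nat.card_divisors (factorial_ne_zero k)
    _ ≤ ∏ p ∈ primesLE k, ((k !).factorization p + 1) :=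
        prod_le_prod_of_subset_of_one_le' hsub fun _ _ _ => le_add_self
    _ ≤ ∏ p ∈ primesLE k, if p ≤ m then k + 1 else k / m + 1 := by
        refine prod_le_prod' fun p hp => ?_
        have hv := factorization_factorial_le_div_pred (prime_of_mem_primesLE hp) k
        split_ifs with hpm
        · exact Nat.succ_le_succ (hv.trans (Nat.div_le_self _ _))
        · exact Nat.succ_le_succ (hv.trans (Nat.div_le_div_left (by omega) hm))
    _ = (k + 1) ^ #{p ∈ primesLE k | p ≤ m} * (k / m + 1) ^ #{p ∈ primesLE k | ¬p ≤ m} := by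
        rw [prod_ite, prod_const, prod_const]
    _ ≤ (k + 1) ^ m * (k / m + 1) ^ primeCounting k := by
        rw [← primesLE_card_eq_primeCounting]
        gcongr
        · exact Nat.le_add_left 1 k
        · exact Nat.le_add_left 1 _
        · exact filter_subset _ _

theorem log_card_divisors_factorial_le (k : ℕ) {m : ℕ} (hm : 0 < m) :
    Real.log #(k !).divisors ≤
      m * Real.log (k + 1) + primeCounting k * Real.log ((k / m : ℕ) + 1) := by
  calc Real.log #(k !).divisors
      ≤ Real.log (((k + 1) ^ m * (k / m + 1) ^ primeCounting k : ℕ) : ℝ) :=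
        Real.log_le_log (by exact_mod_cast card_divisors_factorial_pos k)
          (by exact_mod_cast card_divisors_factorial_le k hm)
    _ = _ := by
        push_cast
        rw [Real.log_mul (by positivity) (by positivity), Real.log_pow, Real.log_pow]

theorem Real.log_add_one_le_two_mul_log {x : ℝ} (hx : 2 ≤ x) :
    Real.log (x + 1) ≤ 2 * Real.log x := by
  calc Real.log (x + 1) ≤ Real.log (x ^ 2) := Real.log_le_log (by linarith) (by nlinarith)
    _ = 2 * Real.log x := by rw [Real.log_pow]; push_cast; ring

theorem log_card_divisors_factorial_le_of_primeCounting_le {k : ℕ} {C : ℝ}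
    (hπ : (primeCounting k : ℝ) ≤ C * k / Real.log k) (hL : 1 ≤ Real.log (Real.log k)) :
    Real.log #(k !).divisors ≤
      (2 + C * (Real.log 2 + 2)) * (k * Real.log (Real.log k) / Real.log k) + 2 * Real.log k := by
  set L := Real.log k
  have hL0 : 0 < L := by
    by_contra h
    have hL_eq : L = 0 := le_antisymm (not_lt.mp h) (Real.log_natCast_nonneg k)
    rw [hL_eq, Real.log_zero] at hL
    norm_num at hL
  have hL2 : 2 ≤ L := by linarith [Real.log_le_sub_one_of_pos hL0]
  have hk : (2 : ℝ) ≤ k := by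
    have h1 : (1 : ℝ) < k := (Real.log_pos_iff (Nat.cast_nonneg k)).mp hL0
    exact_mod_cast (show 1 < k by exact_mod_cast h1)
  set m := ⌈k / L ^ 2⌉₊
  have hm : 0 < m := Nat.ceil_pos.mpr (by positivity)
  have hm_le : (m : ℝ) ≤ k / L ^ 2 + 1 := (Nat.ceil_lt_add_one (by positivity)).le
  have hk_le : (k : ℝ) ≤ m * L ^ 2 := (div_le_iff₀ (by positivity)).mp (Nat.le_ceil _)
  have hquot : ((k / m : ℕ) : ℝ) + 1 ≤ 2 * L ^ 2 := by
    have : ((k / m : ℕ) : ℝ) ≤ L ^ 2 :=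
      Nat.cast_div_le.trans ((div_le_iff₀ (by positivity)).mpr (by linarith))
    nlinarith
  have hlog_quot : Real.log (((k / m : ℕ) : ℝ) + 1) ≤ (Real.log 2 + 2) * Real.log L := by
    calc Real.log (((k / m : ℕ) : ℝ) + 1) ≤ Real.log (2 * L ^ 2) :=
          Real.log_le_log (by positivity) hquot
      _ = Real.log 2 + 2 * Real.log L := by
          rw [Real.log_mul (by norm_num) (by positivity), Real.log_pow]; push_cast; ring
      _ ≤ (Real.log 2 + 2) * Real.log L := by nlinarith [Real.log_nonneg one_le_two]
  have hC : 0 ≤ C * k / L := (Nat.cast_nonneg _).trans hπ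
  calc Real.log #(k !).divisors
      ≤ m * Real.log (k + 1) + primeCounting k * Real.log ((k / m : ℕ) + 1) :=
        log_card_divisors_factorial_le k hm
    _ ≤ (k / L ^ 2 + 1) * (2 * L) + C * k / L * ((Real.log 2 + 2) * Real.log L) := by
        gcongr
        · exact Real.log_nonneg (by linarith)
        · exact Real.log_add_one_le_two_mul_log hk
        · exact Real.log_nonneg (by linarith [Nat.cast_nonneg (α := ℝ) (k / m)])
    _ = 2 * (k / L) + C * (Real.log 2 + 2) * (k * Real.log L / L) + 2 * L := by
        field_simp
        ring
    _ ≤ (2 + C * (Real.log 2 + 2)) * (k * Real.log L / L) + 2 * L := by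
        have : k / L ≤ k * Real.log L / L := by
          gcongr
          exact le_mul_of_one_le_right (by positivity) hL
        nlinarith

theorem tendsto_log_succ_mul_card_divisors_factorial_div :
    Tendsto (fun k : ℕ => Real.log ((k + 1) * #(k !).divisors) / k) atTop (𝓝 0) := by
  set A := 2 + (Real.log 4 + 1) * (Real.log 2 + 2)
  have hupper : Tendsto (fun x : ℝ => A * (Real.log (Real.log x) / Real.log x) +
      4 * (Real.log x / x)) atTop (𝓝 0) := by
    have hlog_div := Real.isLittleO_log_id_atTop.tendsto_div_nhds_zero
    simpa using ((hlog_div.comp Real.tendsto_log_atTop).const_mul A).add (hlog_div.const_mul 4)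
  have hπ : ∀ᶠ k : ℕ in atTop, (primeCounting k : ℝ) ≤ (Real.log 4 + 1) * k / Real.log k := by
    simpa using
      tendsto_natCast_atTop_atTop.eventually (Chebyshev.eventually_primeCounting_le one_pos)
  have hloglog : ∀ᶠ k : ℕ in atTop, 1 ≤ Real.log (Real.log k) :=
    (Real.tendsto_log_atTop.comp (Real.tendsto_log_atTop.comp
      tendsto_natCast_atTop_atTop)).eventually_ge_atTop 1
  refine tendsto_of_tendsto_of_tendsto_of_le_of_le' tendsto_const_nhds
    (hupper.comp tendsto_natCast_atTop_atTop) ?_ ?_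
  · filter_upwards with k
    have hd : (1 : ℝ) ≤ #(k !).divisors := by exact_mod_cast card_divisors_factorial_pos k
    have hk : (1 : ℝ) ≤ k + 1 := by linarith [Nat.cast_nonneg (α := ℝ) k]
    exact div_nonneg (Real.log_nonneg (one_le_mul_of_one_le_of_one_le hk hd)) (Nat.cast_nonneg k)
  · filter_upwards [hπ, hloglog, eventually_ge_atTop 2] with k hπk hLk hk
    have hk' : (2 : ℝ) ≤ k := by exact_mod_cast hk
    have hd := card_divisors_factorial_pos k
    rw [Function.comp_apply, div_le_iff₀' (by positivity),
      Real.log_mul (by positivity) (by positivity)]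
    calc Real.log (k + 1) + Real.log #(k !).divisors
        ≤ 2 * Real.log k + (A * (k * Real.log (Real.log k) / Real.log k) + 2 * Real.log k) :=
          add_le_add (Real.log_add_one_le_two_mul_log hk')
            (log_card_divisors_factorial_le_of_primeCounting_le hπk hLk)
      _ = k * (A * (Real.log (Real.log k) / Real.log k) + 4 * (Real.log k / k)) := by
          field_simp
          ring

theorem exp_over_divisors_factorial_tendsto_atTop (a : ℝ) (ha : 1 < a)
    (n : ℕ) (hn : 0 < n) :
    Tendsto (fun k : ℕ =>
        a ^ ((k : ℝ) / n) / ((k + 1) * ((k ! : ℕ).divisors.card)))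
      atTop atTop := by
  have hc : 0 < Real.log a / n := div_pos (Real.log_pos ha) (by exact_mod_cast hn)
  have hexponent : Tendsto (fun k : ℕ =>
      (k : ℝ) * (Real.log a / n - Real.log ((k + 1) * #(k !).divisors) / k)) atTop atTop :=
    tendsto_natCast_atTop_atTop.atTop_mul_pos hc (by
      simpa using tendsto_const_nhds.sub tendsto_log_succ_mul_card_divisors_factorial_div)
  refine (Real.tendsto_exp_atTop.comp hexponent).congr' ?_
  filter_upwards [eventually_ne_atTop 0] with k hk
  have hd := card_divisors_factorial_pos k
  rw [Function.comp_apply, mul_sub, mul_div_cancel₀ _ (by positivity), Real.exp_sub,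
    Real.exp_log (by positivity), Real.rpow_def_of_pos (by linarith)]
  congr 2
  ring
end
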